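/- Let t ≥ 2. If F ⊆ 2^[n] is a t-cover-free family, then |F| ≤ t + C(n, ⌈(n - t)/C(t+1,2)⌉). -/

import Mathlib

/-- A family `F` of subsets is `t`-cover-free if no member is contained in the
union of at most `t` other members. -/
def CoverFree {α : Type*} [DecidableEq α] (t : ℕ) (F : Finset (Finset α)) : Prop :=
  ∀ A₀ ∈ F, ∀ S ⊆ F.erase A₀, S.Nonempty → S.card ≤ t → ¬ A₀ ⊆ S.biUnion id

/-!
Call `T ⊆ D` a private subset of a member `D` of `F` if no other member contains it, and put
`k = ⌈(n - t) / C(t + 1, 2)⌉`. Choosing a private subset of size at most `k` for each member that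
has one is injective and yields an antichain of sets of size at most `k ≤ (n + 1) / 2`, so by the
LYM inequality there are at most `C(n, k)` such members.

If a member `D` has no private subset of size at most `k`, then for any `s ≤ t` other members,
more than `(t - s) k` points of `D` lie outside their union: were there at most `k` of them, one
more member would cover them all; otherwise a `k`-subset of them lies in a new member, and adding
it leaves `k` fewer points uncovered. So among `t + 1` such members the `i`-th has more than
`(t - i) k` points outside the previous ones, and together they cover at least
`C(t + 1, 2) k + t + 1 > n` points.
-/

open Finset

theorem Nat.choose_le_choose_of_le_of_two_mul_le {n r k : ℕ} (hrk : r ≤ k) (hk : 2 * k ≤ n + 1) :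
    n.choose r ≤ n.choose k := by
  induction k, hrk using Nat.le_induction with
  | base => rfl
  | succ k _ ih =>
    refine (ih (by omega)).trans (Nat.le_of_mul_le_mul_right ?_ k.succ_pos)
    rw [Nat.choose_succ_right_eq]
    exact Nat.mul_le_mul_left _ (by omega)

theorem Nat.two_mul_ceilDiv_le {m c : ℕ} (hc : 2 ≤ c) : 2 * (m ⌈/⌉ c) ≤ m + 1 := by
  have : m ⌈/⌉ c ≤ (m + 1) / 2 :=
    (ceilDiv_le_iff_le_mul (by omega)).2 <|
      calc m ≤ 2 * ((m + 1) / 2) := by omega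
        _ ≤ c * ((m + 1) / 2) := Nat.mul_le_mul_right _ hc
  omega

theorem Finset.sum_range_tsub_eq_choose_two (t : ℕ) :
    ∑ i ∈ range (t + 1), (t - i) = (t + 1).choose 2 := by
  induction t with
  | zero => rfl
  | succ t ih =>
    rw [sum_range_succ', Nat.choose_succ_succ (t + 1), ← ih]
    simp [add_comm]

theorem IsAntichain.card_le_choose_of_forall_card_le {α : Type*} [Fintype α]
    {𝒜 : Finset (Finset α)} {k : ℕ} (h𝒜 : IsAntichain (· ⊆ ·) (𝒜 : Set (Finset α)))
    (hk : 2 * k ≤ Fintype.card α + 1) (h𝒜k : ∀ A ∈ 𝒜, #A ≤ k) :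
    #𝒜 ≤ (Fintype.card α).choose k := by
  have hpos : 0 < ((Fintype.card α).choose k : ℚ≥0) :=
    Nat.cast_pos.2 <| Nat.choose_pos (by omega)
  have h := calc
    ∑ _ ∈ 𝒜, ((Fintype.card α).choose k : ℚ≥0)⁻¹
    _ ≤ ∑ s ∈ 𝒜, ((Fintype.card α).choose #s : ℚ≥0)⁻¹ := by
      gcongr with s hs
      · exact mod_cast Nat.choose_pos s.card_le_univ
      · exact Nat.choose_le_choose_of_le_of_two_mul_le (h𝒜k s hs) hk
    _ ≤ 1 := lubell_yamamoto_meshalkin_inequality_sum_inv_choose h𝒜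
  simpa [mul_inv_le_iff₀' hpos] using h

section PrivateSubset

variable {α : Type*} [DecidableEq α]

def IsPrivateSubset (F : Finset (Finset α)) (D T : Finset α) : Prop :=
  T ⊆ D ∧ ∀ C ∈ F, C ≠ D → ¬ T ⊆ C

theorem exists_mem_erase_superset_of_not_exists_isPrivateSubset {F : Finset (Finset α)}
    {D T : Finset α} {k : ℕ} (hD : ¬ ∃ T, IsPrivateSubset F D T ∧ #T ≤ k) (hTD : T ⊆ D)
    (hTk : #T ≤ k) : ∃ C ∈ F.erase D, T ⊆ C := by
  by_contra! hT
  exact hD ⟨T, ⟨hTD, fun C hC hCD => hT C (mem_erase.2 ⟨hCD, hC⟩)⟩, hTk⟩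

theorem card_le_choose_of_forall_exists_isPrivateSubset [Fintype α] {G F : Finset (Finset α)}
    {k : ℕ} (hGF : G ⊆ F) (hk : 2 * k ≤ Fintype.card α + 1)
    (hG : ∀ D ∈ G, ∃ T, IsPrivateSubset F D T ∧ #T ≤ k) :
    #G ≤ (Fintype.card α).choose k := by
  choose! T hT hTk using hG
  have hinj : Set.InjOn T G := fun D hD D' hD' hTD => by
    by_contra hne
    exact (hT D hD).2 D' (hGF hD') (Ne.symm hne) (hTD ▸ (hT D' hD').1)
  rw [← card_image_of_injOn hinj]
  refine IsAntichain.card_le_choose_of_forall_card_le ?_ hk (forall_mem_image.2 hTk)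
  rw [coe_image]
  rintro _ ⟨D, hD, rfl⟩ _ ⟨D', hD', rfl⟩ hne hsub
  exact (hT D hD).2 D' (hGF hD') (fun h => hne (h ▸ rfl)) (hsub.trans (hT D' hD').1)

end PrivateSubset

namespace CoverFree

variable {α : Type*} [DecidableEq α] {t k : ℕ} {F : Finset (Finset α)}

theorem mul_lt_card_sdiff_biUnion (h : CoverFree t F) (ht : 1 ≤ t) {D : Finset α} (hD : D ∈ F)
    (hDk : ¬ ∃ T, IsPrivateSubset F D T ∧ #T ≤ k) {𝒮 : Finset (Finset α)} (h𝒮 : 𝒮 ⊆ F.erase D)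
    (h𝒮t : #𝒮 ≤ t) : (t - #𝒮) * k < #(D \ 𝒮.biUnion id) := by
  obtain ⟨m, hm⟩ : ∃ m, t - #𝒮 = m := ⟨_, rfl⟩
  rw [hm]
  induction m generalizing 𝒮 with
  | zero =>
    rw [zero_mul, card_pos, sdiff_nonempty]
    exact h D hD 𝒮 h𝒮 (card_pos.1 (by omega)) h𝒮t
  | succ m ih =>
    set U := D \ 𝒮.biUnion id
    have hUk : k < #U := by
      by_contra! hU
      obtain ⟨C, hC, hUC⟩ :=
        exists_mem_erase_superset_of_not_exists_isPrivateSubset hDk sdiff_subset hU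
      refine h D hD (insert C 𝒮) (insert_subset hC h𝒮) (insert_nonempty _ _)
        ((card_insert_le _ _).trans (by omega)) ?_
      rw [biUnion_insert, id]
      exact sdiff_le_iff'.1 hUC
    rcases Nat.eq_zero_or_pos k with rfl | hk
    · simpa using hUk
    obtain ⟨T, hTU, hTk⟩ := exists_subset_card_eq hUk.le
    obtain ⟨C, hC, hTC⟩ := exists_mem_erase_superset_of_not_exists_isPrivateSubset hDk
      (hTU.trans sdiff_subset) hTk.le
    have hC𝒮 : C ∉ 𝒮 := by
      intro hC𝒮
      obtain ⟨x, hx⟩ : T.Nonempty := card_pos.1 (by omega)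
      exact (mem_sdiff.1 (hTU hx)).2 (mem_biUnion.2 ⟨C, hC𝒮, hTC hx⟩)
    have hrest : D \ (insert C 𝒮).biUnion id ⊆ U \ T := fun x hx => by
      simp only [biUnion_insert, id, mem_sdiff, mem_union, not_or] at hx
      exact mem_sdiff.2 ⟨mem_sdiff.2 ⟨hx.1, hx.2.2⟩, fun hxT => hx.2.1 (hTC hxT)⟩
    have hC𝒮t : #(insert C 𝒮) = #𝒮 + 1 := card_insert_of_notMem hC𝒮
    have := ih (insert_subset hC h𝒮) (by omega) (by omega)
    have := (card_le_card hrest).trans_eq (card_sdiff_of_subset hTU)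
    rw [add_one_mul]
    omega

theorem sum_range_le_card_biUnion (h : CoverFree t F) (ht : 1 ≤ t) {ℬ : Finset (Finset α)}
    (hℬF : ℬ ⊆ F) (hℬ : ∀ D ∈ ℬ, ¬ ∃ T, IsPrivateSubset F D T ∧ #T ≤ k) (hℬt : #ℬ ≤ t + 1) :
    ∑ i ∈ range #ℬ, ((t - i) * k + 1) ≤ #(ℬ.biUnion id) := by
  induction ℬ using Finset.induction_on with
  | empty => simp
  | @insert D ℬ hDℬ ih =>
    rw [insert_subset_iff] at hℬF
    rw [card_insert_of_notMem hDℬ] at hℬt ⊢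
    have hℬD : ℬ ⊆ F.erase D := fun B hB =>
      mem_erase.2 ⟨fun hBD => hDℬ (hBD ▸ hB), hℬF.2 hB⟩
    have hnew := h.mul_lt_card_sdiff_biUnion ht hℬF.1 (hℬ D (mem_insert_self D ℬ)) hℬD
      (by omega)
    have hold := ih hℬF.2 (fun B hB => hℬ B (mem_insert_of_mem hB)) (by omega)
    rw [sum_range_succ, biUnion_insert, id, ← card_sdiff_add_card]
    omega

theorem card_le_of_forall_not_exists_isPrivateSubset [Fintype α] (h : CoverFree t F)
    (ht : 1 ≤ t) (hk : Fintype.card α ≤ (t + 1).choose 2 * k + t) {G : Finset (Finset α)}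
    (hGF : G ⊆ F) (hG : ∀ D ∈ G, ¬ ∃ T, IsPrivateSubset F D T ∧ #T ≤ k) : #G ≤ t := by
  by_contra! hbig
  obtain ⟨ℬ, hℬ, hℬt⟩ := exists_subset_card_eq (Nat.succ_le_of_lt hbig)
  have hsum := h.sum_range_le_card_biUnion ht (hℬ.trans hGF) (fun D hD => hG D (hℬ hD)) hℬt.le
  rw [hℬt, sum_add_distrib, ← sum_mul, sum_range_tsub_eq_choose_two] at hsum
  have := card_le_univ (ℬ.biUnion id)
  simp only [sum_const, card_range, smul_eq_mul, mul_one] at hsum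
  omega

end CoverFree

theorem stmt_15 (n t : ℕ) (ht : 2 ≤ t)
    (F : Finset (Finset (Fin n))) (h : CoverFree t F) :
    F.card ≤ t + n.choose ((n - t) ⌈/⌉ (t + 1).choose 2) := by
  set k := (n - t) ⌈/⌉ (t + 1).choose 2
  have hc : 2 ≤ (t + 1).choose 2 :=
    (show 2 ≤ (3).choose 2 by decide).trans (Nat.choose_le_choose 2 (by omega))
  have hk : 2 * k ≤ Fintype.card (Fin n) + 1 := by
    rw [Fintype.card_fin]
    exact (Nat.two_mul_ceilDiv_le hc).trans (by omega)
  have hnk : Fintype.card (Fin n) ≤ (t + 1).choose 2 * k + t := by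
    rw [Fintype.card_fin]
    have : n - t ≤ (t + 1).choose 2 * k := le_smul_ceilDiv (zero_lt_two.trans_le hc)
    omega
  classical
  rw [← card_filter_add_card_filter_not (fun D => ∃ T, IsPrivateSubset F D T ∧ #T ≤ k)]
  have hgood := card_le_choose_of_forall_exists_isPrivateSubset (filter_subset _ F) hk
    (fun D hD => (mem_filter.1 hD).2)
  have hbad := h.card_le_of_forall_not_exists_isPrivateSubset (by omega) hnk (filter_subset _ F)
    (fun D hD => (mem_filter.1 hD).2)
  rw [Fintype.card_fin] at hgood
  omega
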